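/- arXiv:0708.4191 — 3 statements merged into one kernel-verified Lean document; each statement's English description precedes it below -/
import Mathlib

section
/- The Super-Catalan generating series f(x) = Σ_{n≥1} a_n x^n (where a_n counts planar reduced rooted trees with n leaves) satisfies the algebraic equation 2f(x)² - (1+x)f(x) + x = 0, which is the equation satisfied by (1/4)(1 + x - √(1-6x+x²)). -/
open PowerSeries
open scoped Classical

noncomputable section

/-- `a` counts planar reduced rooted trees with `n` leaves (all arities ≥ 2
allowed): `a 1 = 1` and for `n ≥ 2`,
`a n = ∑_{k≥2} ∑_{i₁+⋯+i_k = n, i_j ≥ 1} a i₁ ⋯ a i_k`. -/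
def superCatalanRec (a : ℕ → ℕ) : Prop :=
  a 0 = 0 ∧ a 1 = 1 ∧ ∀ n, 2 ≤ n →
    a n = ∑ k ∈ Finset.Icc 2 n,
      ∑ v ∈ (Finset.Nat.antidiagonalTuple k n).filter (fun v => ∀ j, 0 < v j),
        ∏ j, a (v j)

/-- Coefficient of a power of a power series as a sum over `antidiagonalTuple`. -/
lemma coeff_pow_tuple (c : ℕ → ℚ) (k n : ℕ) :
    (coeff (R := ℚ) n) ((PowerSeries.mk c) ^ k) =
      ∑ v ∈ Finset.Nat.antidiagonalTuple k n, ∏ j, c (v j) := by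
  induction k generalizing n with
  | zero =>
    cases n with
    | zero => simp
    | succ m => simp [Finset.Nat.antidiagonalTuple_zero_succ, coeff_one]
  | succ k ih =>
    rw [pow_succ', coeff_mul]
    have : ∀ p ∈ Finset.HasAntidiagonal.antidiagonal n,
        (coeff (R := ℚ) p.1) (PowerSeries.mk c) * (coeff (R := ℚ) p.2) ((PowerSeries.mk c) ^ k) =
          ∑ v ∈ Finset.Nat.antidiagonalTuple k p.2, c p.1 * ∏ j, c (v j) := by
      intro p _
      rw [coeff_mk, ih, Finset.mul_sum]
    rw [Finset.sum_congr rfl this, Finset.sum_sigma']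
    refine Finset.sum_nbij' (fun x => Fin.cons x.1.1 x.2)
      (fun v => ⟨(v 0, ∑ j, v (Fin.succ j)), Fin.tail v⟩) ?_ ?_ ?_ ?_ ?_
    · rintro ⟨⟨i, j⟩, v⟩ h
      simp only [Finset.mem_sigma, Finset.HasAntidiagonal.mem_antidiagonal,
        Finset.Nat.mem_antidiagonalTuple] at h ⊢
      rw [Fin.sum_univ_succ]
      simp only [Fin.cons_zero, Fin.cons_succ, h.2, h.1]
    · intro v hv
      simp only [Finset.Nat.mem_antidiagonalTuple] at hv
      simp only [Finset.mem_sigma, Finset.HasAntidiagonal.mem_antidiagonal,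
        Finset.Nat.mem_antidiagonalTuple]
      constructor
      · rw [← hv, Fin.sum_univ_succ]
      · rfl
    · rintro ⟨⟨i, j⟩, v⟩ h
      simp only [Finset.mem_sigma, Finset.HasAntidiagonal.mem_antidiagonal,
        Finset.Nat.mem_antidiagonalTuple] at h
      have h2 : ∑ j', (Fin.cons i v : Fin (k+1) → ℕ) (Fin.succ j') = j := by
        simp only [Fin.cons_succ]
        exact h.2
      simp [Fin.cons_zero, Fin.tail_cons, h2]
      exact h.2
    · intro v hv
      simp [Fin.cons_self_tail]
    · rintro ⟨⟨i, j⟩, v⟩ h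
      simp [Fin.prod_univ_succ, Fin.cons_zero, Fin.cons_succ]

/-- The super-Catalan generating series `f(x) = ∑_{n≥1} a_n x^n` satisfies the
algebraic equation `2f² - (1+x)f + x = 0` (the equation of
`(1/4)(1 + x - √(1-6x+x²))`). -/
theorem superCatalan_algebraic_equation (a : ℕ → ℕ) (ha : superCatalanRec a) :
    2 * (PowerSeries.mk fun n => (a n : ℚ)) ^ 2 -
        (1 + X) * (PowerSeries.mk fun n => (a n : ℚ)) + X = 0 := by
  obtain ⟨h0, h1, hrec⟩ := ha
  set c : ℕ → ℚ := fun n => (a n : ℚ) with hc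
  set f : ℚ⟦X⟧ := PowerSeries.mk c with hf
  have hc0 : c 0 = 0 := by simp [hc, h0]
  have hc1 : c 1 = 1 := by simp [hc, h1]
  -- coefficients of powers vanish below the exponent
  have hvanish : ∀ k n : ℕ, n < k → (coeff (R := ℚ) n) (f ^ k) = 0 := by
    intro k n hnk
    rw [hf, coeff_pow_tuple]
    refine Finset.sum_eq_zero fun v hv => ?_
    rw [Finset.Nat.mem_antidiagonalTuple] at hv
    have : ∃ j, v j = 0 := by
      by_contra hcon
      push_neg at hcon
      have : k ≤ ∑ j, v j := by
        calc k = ∑ _j : Fin k, 1 := by simp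
        _ ≤ ∑ j, v j := Finset.sum_le_sum fun j _ => Nat.one_le_iff_ne_zero.2 (hcon j)
      omega
    obtain ⟨j, hj⟩ := this
    exact Finset.prod_eq_zero (Finset.mem_univ j) (by rw [hj, hc0])
  -- the recursion, at the level of power series coefficients
  have hkey : ∀ j : ℕ, (coeff (R := ℚ) j) (f - X) = ∑ k ∈ Finset.Icc 2 j, (coeff (R := ℚ) j) (f ^ k) := by
    intro j
    match j with
    | 0 => simp [hf, hc0]
    | 1 => simp [hf, hc1, coeff_X]
    | (m + 2) =>
      set j := m + 2 with hj
      have hj2' : 2 ≤ j := by omega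
      have hx : (coeff (R := ℚ) j) X = 0 := by
        rw [coeff_X, if_neg (by omega)]
      rw [map_sub, hx, sub_zero, hf, coeff_mk]
      have := hrec j hj2'
      have hcast : c j = ∑ k ∈ Finset.Icc 2 j,
          ∑ v ∈ (Finset.Nat.antidiagonalTuple k j).filter (fun v => ∀ i, 0 < v i),
            ∏ i, c (v i) := by
        rw [hc]
        push_cast [this]
        rfl
      rw [hcast]
      refine Finset.sum_congr rfl fun k _ => ?_
      rw [coeff_pow_tuple]
      refine Finset.sum_subset (Finset.filter_subset _ _) fun v hv hnv => ?_
      rw [Finset.mem_filter] at hnv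
      have : ∃ i, v i = 0 := by
        by_contra hcon
        push_neg at hcon
        exact hnv ⟨hv, fun i => Nat.pos_of_ne_zero (hcon i)⟩
      obtain ⟨i, hi⟩ := this
      exact Finset.prod_eq_zero (Finset.mem_univ i) (by rw [hi, hc0])
  -- truncated version with a uniform upper bound
  have hkey' : ∀ N j : ℕ, j ≤ N →
      (coeff (R := ℚ) j) (f - X) = ∑ k ∈ Finset.Icc 2 N, (coeff (R := ℚ) j) (f ^ k) := by
    intro N j hjN
    rw [hkey j]
    refine Finset.sum_subset (Finset.Icc_subset_Icc_right hjN) fun k hk hnk => ?_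
    rw [Finset.mem_Icc] at hk hnk
    exact hvanish k j (by omega)
  -- the fundamental identity f - X - f² = f * (f - X)
  have E : f - X - f ^ 2 = f * (f - X) := by
    ext n
    rw [map_sub, coeff_mul]
    have hR : ∀ p ∈ Finset.HasAntidiagonal.antidiagonal n,
        (coeff (R := ℚ) p.1) f * (coeff (R := ℚ) p.2) (f - X) =
          ∑ k ∈ Finset.Icc 2 n, c p.1 * (coeff (R := ℚ) p.2) (f ^ k) := by
      intro p hp
      rw [Finset.HasAntidiagonal.mem_antidiagonal] at hp
      rw [hkey' n p.2 (by omega), hf, coeff_mk, Finset.mul_sum]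
    rw [Finset.sum_congr rfl hR, Finset.sum_comm]
    have hmul : ∀ k ∈ Finset.Icc 2 n,
        (∑ p ∈ Finset.HasAntidiagonal.antidiagonal n, c p.1 * (coeff (R := ℚ) p.2) (f ^ k)) =
          (coeff (R := ℚ) n) (f ^ (k + 1)) := by
      intro k _
      rw [pow_succ', coeff_mul]
      exact Finset.sum_congr rfl fun p _ => by simp [hf, coeff_mk]
    rw [Finset.sum_congr rfl hmul, hkey' n n le_rfl]
    have hre : (∑ k ∈ Finset.Icc 2 n, (coeff (R := ℚ) n) (f ^ (k + 1))) =
        ∑ k ∈ Finset.Icc 3 (n + 1), (coeff (R := ℚ) n) (f ^ k) := by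
      rw [show (3 : ℕ) = 2 + 1 from rfl, ← Finset.map_add_right_Icc, Finset.sum_map]
      rfl
    rw [hre]
    rcases Nat.lt_or_ge n 2 with hn | hn
    · rw [Finset.Icc_eq_empty (by omega : ¬ (2:ℕ) ≤ n),
        Finset.Icc_eq_empty (by omega : ¬ (3:ℕ) ≤ n + 1)]
      simp [hvanish 2 n hn]
    · have e1 : Finset.Icc 2 n = insert 2 (Finset.Icc 3 n) := by
        ext x; simp only [Finset.mem_Icc, Finset.mem_insert]; omega
      have e2 : Finset.Icc 3 (n + 1) = insert (n + 1) (Finset.Icc 3 n) := by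
        ext x; simp only [Finset.mem_Icc, Finset.mem_insert]; omega
      rw [e1, e2, Finset.sum_insert (by simp), Finset.sum_insert (by simp [Finset.mem_Icc]),
        hvanish (n + 1) n (by omega)]
      ring
  linear_combination -E

end
end

section
/- Let T ⊆ S ⊆ {2,3,...}. Every planar reduced tree with internal arities in S decomposes uniquely as a tree with internal arities in T whose leaves are substituted by trees with internal arities in S and root arity in S∖T (or trivial). Consequently, on generating series: f_S(x) = f_T(f_{T,S}(x)), where f_S, f_T count trees with arities in S resp. T, and f_{T,S} counts trees with root arity in S∖T and remaining arities in S (plus the trivial tree). -/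
open PowerSeries
open scoped Classical

noncomputable section

/-- Composition `g ∘ f` of formal power series (meaningful when `f` has zero
constant term). -/
def PowerSeries.comp {K : Type*} [CommRing K] (g f : PowerSeries K) : PowerSeries K :=
  PowerSeries.mk fun n =>
    ∑ k ∈ Finset.range (n + 1), PowerSeries.coeff (R := K) k g * PowerSeries.coeff (R := K) n (f ^ k)

/-- The series `g_S(x) = x - ∑_{i ∈ S} x^i`. -/
def gSeries (K : Type*) [CommRing K] (S : Set ℕ) : PowerSeries K :=
  PowerSeries.mk fun n => if n = 1 then 1 else if n ∈ S then -1 else 0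

/-- `∑_{k ∈ E} f^k`, defined coefficientwise. -/
def sumPow {K : Type*} [CommRing K] (E : Set ℕ) (f : PowerSeries K) : PowerSeries K :=
  PowerSeries.mk fun n =>
    ∑ k ∈ Finset.range (n + 1), if k ∈ E then PowerSeries.coeff (R := K) n (f ^ k) else 0

namespace TreeAux

variable {K : Type*} [CommRing K]

lemma coeff_comp (g f : PowerSeries K) (n : ℕ) :
    coeff (R := K) n (g.comp f) = ∑ k ∈ Finset.range (n + 1), coeff (R := K) k g * coeff (R := K) n (f ^ k) := by
  simp [PowerSeries.comp]

lemma coeff_pow_eq_zero {f : PowerSeries K} (hf : constantCoeff (R := K) f = 0)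
    {n k : ℕ} (h : n < k) : coeff (R := K) n (f ^ k) = 0 := by
  have hX : (X : PowerSeries K) ∣ f := X_dvd_iff.mpr hf
  have hXk : (X : PowerSeries K) ^ k ∣ f ^ k := pow_dvd_pow_of_dvd hX k
  exact (PowerSeries.X_pow_dvd_iff.mp hXk) n h

lemma coeff_comp_extend (g f : PowerSeries K) (hf : constantCoeff (R := K) f = 0) {n N : ℕ}
    (hN : n + 1 ≤ N) :
    coeff (R := K) n (g.comp f) = ∑ k ∈ Finset.range N, coeff (R := K) k g * coeff (R := K) n (f ^ k) := by
  rw [coeff_comp]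
  apply Finset.sum_subset (Finset.range_subset_range.mpr hN)
  intro k _ hk
  have hnk : n < k := by simp only [Finset.mem_range] at hk; omega
  rw [coeff_pow_eq_zero hf hnk, mul_zero]

lemma one_comp (f : PowerSeries K) : (1 : PowerSeries K).comp f = 1 := by
  ext n
  rw [coeff_comp]
  rw [Finset.sum_eq_single 0]
  · simp
  · intro k _ hk; simp [coeff_one, hk]
  · simp

lemma triangle_sum (n : ℕ) (F : ℕ → ℕ → K) (hF : ∀ i j, n < i + j → F i j = 0) :
    ∑ k ∈ Finset.range (n + 1), ∑ p ∈ Finset.HasAntidiagonal.antidiagonal k, F p.1 p.2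
      = ∑ i ∈ Finset.range (n + 1), ∑ j ∈ Finset.range (n + 1), F i j := by
  rw [← Finset.sum_product']
  have hdisj : ((Finset.range (n + 1) : Finset ℕ) : Set ℕ).PairwiseDisjoint
      (fun k => (Finset.HasAntidiagonal.antidiagonal k : Finset (ℕ × ℕ))) := by
    intro a _ b _ hab
    simp only [Finset.disjoint_left, Finset.HasAntidiagonal.mem_antidiagonal]
    intro p hpa hpb
    exact hab (hpa.symm.trans hpb)
  rw [← Finset.sum_biUnion hdisj]
  apply Finset.sum_subset
  · intro p hp
    simp only [Finset.mem_biUnion, Finset.mem_range, Finset.HasAntidiagonal.mem_antidiagonal] at hp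
    obtain ⟨k, hk, hpk⟩ := hp
    simp only [Finset.mem_product, Finset.mem_range]
    omega
  · intro p _ hp
    simp only [Finset.mem_biUnion, Finset.mem_range, Finset.HasAntidiagonal.mem_antidiagonal] at hp
    apply hF
    by_contra hc
    push_neg at hc
    exact hp ⟨p.1 + p.2, by omega, rfl⟩

lemma mul_comp (g h f : PowerSeries K) (hf : constantCoeff (R := K) f = 0) :
    (g * h).comp f = g.comp f * h.comp f := by
  ext n
  have LHS : coeff (R := K) n ((g * h).comp f)
      = ∑ k ∈ Finset.range (n + 1), ∑ p ∈ Finset.HasAntidiagonal.antidiagonal k,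
          coeff (R := K) p.1 g * coeff (R := K) p.2 h * coeff (R := K) n (f ^ (p.1 + p.2)) := by
    rw [coeff_comp]
    refine Finset.sum_congr rfl fun k _ => ?_
    rw [coeff_mul, Finset.sum_mul]
    refine Finset.sum_congr rfl fun p hp => ?_
    rw [Finset.HasAntidiagonal.mem_antidiagonal] at hp
    rw [hp]
  have RHS : coeff (R := K) n (g.comp f * h.comp f)
      = ∑ i ∈ Finset.range (n + 1), ∑ j ∈ Finset.range (n + 1),
          coeff (R := K) i g * coeff (R := K) j h * coeff (R := K) n (f ^ (i + j)) := by
    rw [coeff_mul]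
    have step : ∀ p ∈ Finset.HasAntidiagonal.antidiagonal n,
        coeff (R := K) p.1 (g.comp f) * coeff (R := K) p.2 (h.comp f)
          = ∑ i ∈ Finset.range (n + 1), ∑ j ∈ Finset.range (n + 1),
              coeff (R := K) i g * coeff (R := K) j h * (coeff (R := K) p.1 (f ^ i) * coeff (R := K) p.2 (f ^ j)) := by
      intro p hp
      rw [Finset.HasAntidiagonal.mem_antidiagonal] at hp
      rw [coeff_comp_extend g f hf (by omega : p.1 + 1 ≤ n + 1),
        coeff_comp_extend h f hf (by omega : p.2 + 1 ≤ n + 1), Finset.sum_mul_sum]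
      refine Finset.sum_congr rfl fun i _ => Finset.sum_congr rfl fun j _ => by ring
    rw [Finset.sum_congr rfl step, Finset.sum_comm]
    refine Finset.sum_congr rfl fun i _ => ?_
    rw [Finset.sum_comm]
    refine Finset.sum_congr rfl fun j _ => ?_
    rw [← Finset.mul_sum, pow_add, coeff_mul]
  rw [LHS, RHS]
  exact triangle_sum n (fun i j => coeff (R := K) i g * coeff (R := K) j h * coeff (R := K) n (f ^ (i + j)))
    (fun i j hij => by
      show coeff (R := K) i g * coeff (R := K) j h * coeff (R := K) n (f ^ (i + j)) = 0
      rw [coeff_pow_eq_zero hf hij, mul_zero])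

lemma pow_comp (g f : PowerSeries K) (hf : constantCoeff (R := K) f = 0) (k : ℕ) :
    (g ^ k).comp f = (g.comp f) ^ k := by
  induction k with
  | zero => simpa using one_comp f
  | succ k ih => rw [pow_succ, pow_succ, mul_comp _ _ _ hf, ih]

lemma comp_assoc (a b c : PowerSeries K) (hb : constantCoeff (R := K) b = 0)
    (hc : constantCoeff (R := K) c = 0) :
    (a.comp b).comp c = a.comp (b.comp c) := by
  ext n
  rw [coeff_comp, coeff_comp]
  have step : ∀ k ∈ Finset.range (n + 1),
      coeff (R := K) k (a.comp b) * coeff (R := K) n (c ^ k)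
        = ∑ j ∈ Finset.range (n + 1), coeff (R := K) j a * (coeff (R := K) k (b ^ j) * coeff (R := K) n (c ^ k)) := by
    intro k hk
    rw [Finset.mem_range] at hk
    rw [coeff_comp_extend a b hb (by omega : k + 1 ≤ n + 1), Finset.sum_mul]
    exact Finset.sum_congr rfl fun j _ => by ring
  rw [Finset.sum_congr rfl step, Finset.sum_comm]
  refine Finset.sum_congr rfl fun j _ => ?_
  rw [← Finset.mul_sum, ← coeff_comp, pow_comp _ _ hc]

lemma comp_X (g : PowerSeries K) : g.comp X = g := by
  ext n
  rw [coeff_comp, Finset.sum_eq_single n]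
  · rw [← pow_one (X : PowerSeries K), ← pow_mul, one_mul, coeff_X_pow]
    simp
  · intro k hk hkn
    rw [Finset.mem_range] at hk
    rw [← pow_one (X : PowerSeries K), ← pow_mul, one_mul, coeff_X_pow]
    simp [Ne.symm hkn]
  · intro h; exact absurd (Finset.self_mem_range_succ n) h

lemma X_comp (f : PowerSeries K) (hf : constantCoeff (R := K) f = 0) :
    (X : PowerSeries K).comp f = f := by
  ext n
  rw [coeff_comp]
  rcases Nat.eq_zero_or_pos n with hn | hn
  · subst hn
    simp [coeff_zero_eq_constantCoeff, hf]
  · rw [Finset.sum_eq_single 1]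
    · simp
    · intro k _ hk; simp [coeff_X, hk]
    · intro h
      exact absurd (Finset.mem_range.mpr (by omega)) h

lemma constantCoeff_comp (g f : PowerSeries K) :
    constantCoeff (R := K) (g.comp f) = constantCoeff (R := K) g := by
  rw [← coeff_zero_eq_constantCoeff_apply, ← coeff_zero_eq_constantCoeff_apply, coeff_comp]
  simp

lemma coeff_pow_self {f : PowerSeries K} (hf : constantCoeff (R := K) f = 0) (n : ℕ) :
    coeff (R := K) n (f ^ n) = (coeff (R := K) 1 f) ^ n := by
  induction n with
  | zero => simp
  | succ n ih =>
    rw [pow_succ, pow_succ, coeff_mul, Finset.sum_eq_single (n, 1)]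
    · rw [ih]
    · rintro ⟨p, q⟩ hpq hne
      rw [Finset.HasAntidiagonal.mem_antidiagonal] at hpq
      rcases Nat.lt_or_ge p n with hp | hp
      · rw [coeff_pow_eq_zero hf hp, zero_mul]
      · have hq : q = 0 ∨ (p = n ∧ q = 1) := by omega
        rcases hq with hq | ⟨hp', hq⟩
        · subst hq
          rw [coeff_zero_eq_constantCoeff_apply, hf, mul_zero]
        · exact absurd (by rw [hp', hq]) hne
    · intro h
      simp [Finset.HasAntidiagonal.mem_antidiagonal] at h

lemma comp_right_cancel {K : Type*} [Field K] {f a b : PowerSeries K}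
    (hf0 : constantCoeff (R := K) f = 0) (hf1 : coeff (R := K) 1 f ≠ 0)
    (h : a.comp f = b.comp f) : a = b := by
  ext n
  induction n using Nat.strong_induction_on with
  | _ n ih =>
    have hn := congrArg (coeff (R := K) n) h
    rw [coeff_comp, coeff_comp, Finset.sum_range_succ, Finset.sum_range_succ] at hn
    have heq : ∑ k ∈ Finset.range n, coeff (R := K) k a * coeff (R := K) n (f ^ k)
        = ∑ k ∈ Finset.range n, coeff (R := K) k b * coeff (R := K) n (f ^ k) :=
      Finset.sum_congr rfl fun k hk => by
        rw [ih k (Finset.mem_range.mp hk)]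
    rw [heq] at hn
    have h2 := add_left_cancel hn
    exact mul_right_cancel₀ (by rw [coeff_pow_self hf0]; exact pow_ne_zero n hf1) h2

lemma gcomp {E : Set ℕ} (hE : E ⊆ Set.Ici 2) (f : PowerSeries K)
    (hf : constantCoeff (R := K) f = 0) :
    (gSeries K E).comp f = f - sumPow E f := by
  have h1E : (1 : ℕ) ∉ E := fun h => by have := hE h; simp [Set.mem_Ici] at this
  ext n
  rw [coeff_comp, map_sub]
  have hsum : coeff (R := K) n (sumPow E f)
      = ∑ k ∈ Finset.range (n + 1), if k ∈ E then coeff (R := K) n (f ^ k) else 0 := by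
    simp [sumPow]
  have hcf : coeff (R := K) n f
      = ∑ k ∈ Finset.range (n + 1), if k = 1 then coeff (R := K) n (f ^ k) else 0 := by
    rcases Nat.eq_zero_or_pos n with hn | hn
    · subst hn
      simp [coeff_zero_eq_constantCoeff, hf]
    · rw [Finset.sum_ite_eq' (Finset.range (n + 1)) 1 (fun k => coeff (R := K) n (f ^ k))]
      simp [Finset.mem_range, hn, Nat.lt_succ_iff]
  rw [hsum, hcf, ← Finset.sum_sub_distrib]
  refine Finset.sum_congr rfl fun k _ => ?_
  have hck : coeff (R := K) k (gSeries K E) = if k = 1 then 1 else if k ∈ E then -1 else 0 := by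
    simp [gSeries]
  rw [hck]
  by_cases hk1 : k = 1
  · subst hk1; simp [h1E]
  · simp only [hk1, if_false]
    by_cases hkE : k ∈ E <;> simp [hkE]

lemma sumPow_split {S T : Set ℕ} (hT : T ⊆ S) (f : PowerSeries K) :
    sumPow S f = sumPow T f + sumPow (S \ T) f := by
  ext n
  simp only [sumPow, coeff_mk, map_add, ← Finset.sum_add_distrib]
  refine Finset.sum_congr rfl fun k _ => ?_
  by_cases hkT : k ∈ T
  · simp [hkT, hT hkT, Set.mem_diff]
  · by_cases hkS : k ∈ S <;> simp [hkT, hkS, Set.mem_diff]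

end TreeAux

open TreeAux

/-- Every planar reduced tree with arities in `S` decomposes uniquely as a
`T`-arity tree with leaves substituted by trees of root arity in `S∖T`; on
generating series this is `f_T ∘ f_{T,S} = f_S`, where `f_S, f_T` are the
compositional inverses of `x - ∑_{i∈S} x^i` resp. `x - ∑_{i∈T} x^i`, and
`f_{T,S} = x + ∑_{k∈S∖T} (f_S)^k`. -/
theorem fT_comp_fTS_eq_fS (K : Type*) [Field K] [CharZero K]
    (S T : Set ℕ) (hT : T ⊆ S) (hS : S ⊆ Set.Ici 2)
    (fS fT : PowerSeries K)
    (hfS0 : constantCoeff (R := K) fS = 0) (hfS : (gSeries K S).comp fS = X)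
    (hfT0 : constantCoeff (R := K) fT = 0) (hfT : (gSeries K T).comp fT = X) :
    fT.comp (X + sumPow (S \ T) fS) = fS := by
  have hT2 : T ⊆ Set.Ici 2 := hT.trans hS
  -- the argument equals (gSeries K T).comp fS
  have key : (gSeries K T).comp fS = X + sumPow (S \ T) fS := by
    rw [gcomp hT2 fS hfS0]
    have hsplit := sumPow_split hT fS
    have hgS : fS - sumPow S fS = X := by
      rw [← gcomp hS fS hfS0]; exact hfS
    calc fS - sumPow T fS
        = (fS - sumPow S fS) + sumPow (S \ T) fS := by rw [hsplit]; ring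
      _ = X + sumPow (S \ T) fS := by rw [hgS]
  have hgT0 : constantCoeff (R := K) (gSeries K T) = 0 := by
    have h0T : (0 : ℕ) ∉ T := fun h => by have := hT2 h; simp [Set.mem_Ici] at this
    rw [← coeff_zero_eq_constantCoeff]
    simp [gSeries, h0T]
  have hfT1 : coeff (R := K) 1 fT ≠ 0 := by
    have h1 := congrArg (coeff (R := K) 1) hfT
    rw [coeff_comp] at h1
    simp only [Finset.sum_range_succ, Finset.range_one, Finset.sum_singleton] at h1
    rw [pow_zero, pow_one] at h1
    have hg0 : coeff (R := K) 0 (gSeries K T) = 0 := by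
      rw [coeff_zero_eq_constantCoeff_apply]; exact hgT0
    have hg1 : coeff (R := K) 1 (gSeries K T) = 1 := by simp [gSeries]
    rw [hg0, hg1, zero_mul, one_mul, zero_add, coeff_one_X] at h1
    intro h
    rw [h] at h1
    exact one_ne_zero h1.symm
  have hinv : fT.comp (gSeries K T) = X := by
    apply comp_right_cancel hfT0 hfT1
    rw [comp_assoc fT (gSeries K T) fT hgT0 hfT0, hfT, comp_X, X_comp fT hfT0]
  rw [← key, ← comp_assoc fT (gSeries K T) fS hgT0 hfS0, hinv, X_comp fS hfS0]

end
end

section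
/- Define the sequence a : ℕ → ℕ by a(1) = 1 and, for n ≥ 2, a(n) = Σ_{k=2}^{n} Σ_{(i_1,...,i_k), i_j≥1, i_1+...+i_k=n} a(i_1)···a(i_k). Then a(n) also satisfies the simpler recursion (super-Catalan recurrence): (n+1)a(n+1) = 3(2n-1)a(n) - (n-2)a(n-1) for n ≥ 2, and a(1),...,a(7) = 1, 1, 3, 11, 45, 197, 903. -/
open scoped Classical

open Finset PowerSeries

private lemma aux_tuple_sum (f : ℕ → ℤ) (k n : ℕ) :
    ∑ v ∈ Finset.Nat.antidiagonalTuple k n, ∏ j, f (v j)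
      = coeff n ((mk f) ^ k) := by
  induction k generalizing n with
  | zero => cases n <;> simp
  | succ k ih =>
    rw [pow_succ', coeff_mul]
    have hr : ∑ p ∈ Finset.HasAntidiagonal.antidiagonal n,
        (coeff p.1) (PowerSeries.mk f) * (coeff p.2) ((PowerSeries.mk f) ^ k)
        = ∑ x ∈ (Finset.HasAntidiagonal.antidiagonal n).sigma
            (fun p => Finset.Nat.antidiagonalTuple k p.2),
            f x.1.1 * ∏ j, f (x.2 j) := by
      rw [Finset.sum_sigma]
      refine Finset.sum_congr rfl fun p _ => ?_
      rw [coeff_mk, ← ih, Finset.mul_sum]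
    rw [hr]
    refine Finset.sum_nbij'
      (fun v => (⟨(v 0, ∑ j : Fin k, v j.succ), Fin.tail v⟩ :
        (_ : ℕ × ℕ) × (Fin k → ℕ)))
      (fun x => Fin.cons x.1.1 x.2) ?_ ?_ ?_ ?_ ?_
    · intro v hv
      rw [Finset.Nat.mem_antidiagonalTuple] at hv
      simp only [Finset.mem_sigma, Finset.HasAntidiagonal.mem_antidiagonal,
        Finset.Nat.mem_antidiagonalTuple]
      refine ⟨?_, rfl⟩
      rw [← hv, Fin.sum_univ_succ]
    · rintro ⟨⟨b1, b2⟩, w⟩ hx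
      simp only [Finset.mem_sigma, Finset.HasAntidiagonal.mem_antidiagonal,
        Finset.Nat.mem_antidiagonalTuple] at hx
      rw [Finset.Nat.mem_antidiagonalTuple, Fin.sum_cons, hx.2, hx.1]
    · intro v _
      simp [Fin.cons_self_tail]
    · rintro ⟨⟨b1, b2⟩, w⟩ hx
      simp only [Finset.mem_sigma, Finset.HasAntidiagonal.mem_antidiagonal,
        Finset.Nat.mem_antidiagonalTuple] at hx
      simp [Fin.tail_cons, hx.2]
    · intro v _
      rw [Fin.prod_univ_succ]
      rfl

/-- The sequence defined by the tree-decomposition recursion also satisfies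
the three-term super-Catalan recurrence
`(n+1)·a(n+1) = 3(2n-1)·a(n) - (n-2)·a(n-1)` for `n ≥ 2`, and its first
values are `1, 1, 3, 11, 45, 197, 903`. -/
theorem superCatalan_three_term_recurrence (a : ℕ → ℕ) (ha : superCatalanRec a) :
    (∀ n : ℕ, 2 ≤ n →
        ((n : ℤ) + 1) * a (n + 1) =
          3 * (2 * (n : ℤ) - 1) * a n - ((n : ℤ) - 2) * a (n - 1)) ∧
      a 1 = 1 ∧ a 2 = 1 ∧ a 3 = 3 ∧ a 4 = 11 ∧ a 5 = 45 ∧ a 6 = 197 ∧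
      a 7 = 903 := by
  obtain ⟨ha0, ha1, harec⟩ := ha
  set F : PowerSeries ℤ := mk (fun n => (a n : ℤ)) with hF
  have hcoeff : ∀ n, coeff n F = (a n : ℤ) := fun n => coeff_mk n _
  have hfilter : ∀ k n : ℕ,
      (∑ v ∈ (Finset.Nat.antidiagonalTuple k n).filter (fun v => ∀ j, 0 < v j),
        ∏ j, a (v j)) = ∑ v ∈ Finset.Nat.antidiagonalTuple k n, ∏ j, a (v j) := by
    intro k n
    refine Finset.sum_filter_of_ne fun v _ hv j => ?_
    rcases Nat.eq_zero_or_pos (v j) with h0 | h0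
    · exact absurd (Finset.prod_eq_zero (Finset.mem_univ j) (by rw [h0, ha0])) hv
    · exact h0
  have hrec : ∀ n, 2 ≤ n →
      (a n : ℤ) = ∑ k ∈ Finset.Icc 2 n, coeff n (F ^ k) := by
    intro n hn
    have h := harec n hn
    simp only [hfilter] at h
    rw [h, hF]
    push_cast
    exact Finset.sum_congr rfl fun k _ => aux_tuple_sum (fun m => (a m : ℤ)) k n
  have hvanish : ∀ k n : ℕ, n < k → coeff n (F ^ k) = 0 := by
    intro k n hnk
    rw [← aux_tuple_sum]
    refine Finset.sum_eq_zero fun v hv => ?_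
    rw [Finset.Nat.mem_antidiagonalTuple] at hv
    by_cases hall : ∀ j, 0 < v j
    · have : k ≤ n := by
        calc k = ∑ _j : Fin k, 1 := by simp
        _ ≤ ∑ j, v j := Finset.sum_le_sum fun j _ => hall j
        _ = n := hv
      omega
    · push_neg at hall
      obtain ⟨j, hj⟩ := hall
      refine Finset.prod_eq_zero (Finset.mem_univ j) ?_
      rw [Nat.le_zero.mp hj, ha0]
      rfl
  -- partial "all compositions" sums
  set S : ℕ → ℤ := fun n => ∑ k ∈ Finset.Icc 1 n, coeff n (F ^ k) with hS
  have hS0 : S 0 = 0 := by simp [hS]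
  have hS1 : S 1 = 1 := by simp [hS, hcoeff, ha1]
  have hsplit : ∀ n, 2 ≤ n →
      S n = (a n : ℤ) + ∑ k ∈ Finset.Icc 2 n, coeff n (F ^ k) := by
    intro n hn
    have hins : Finset.Icc 1 n = insert 1 (Finset.Icc 2 n) := by
      ext x; simp [Finset.mem_Icc, Finset.mem_insert]; omega
    rw [hS]
    simp only
    rw [hins, Finset.sum_insert (by simp), pow_one, hcoeff]
  have hS2 : ∀ n, 2 ≤ n → S n = 2 * (a n : ℤ) := by
    intro n hn
    rw [hsplit n hn, ← hrec n hn]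
    ring
  -- the recursion S n = a n + ∑ a i * S (n - i)
  have hstep : ∀ n, 2 ≤ n →
      S n = (a n : ℤ) + ∑ i ∈ Finset.range (n + 1), (a i : ℤ) * S (n - i) := by
    intro n hn
    rw [hsplit n hn]
    congr 1
    have hre : ∑ k ∈ Finset.Icc 2 n, coeff n (F ^ k)
        = ∑ j ∈ Finset.Icc 1 (n - 1), coeff n (F ^ (j + 1)) := by
      refine Finset.sum_nbij' (fun k => k - 1) (fun j => j + 1) ?_ ?_ ?_ ?_ ?_
      · intro x hx; simp only [Finset.mem_Icc] at *; omega
      · intro x hx; simp only [Finset.mem_Icc] at *; omega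
      · intro x hx; simp only [Finset.mem_Icc] at hx; show x - 1 + 1 = x; omega
      · intro x hx; simp only [Finset.mem_Icc] at hx; show x + 1 - 1 = x; omega
      · intro x hx
        simp only [Finset.mem_Icc] at hx
        show (coeff n) (F ^ x) = (coeff n) (F ^ (x - 1 + 1))
        rw [Nat.sub_add_cancel (by omega : 1 ≤ x)]
    rw [hre]
    have hterm : ∀ j, coeff n (F ^ (j + 1))
        = ∑ i ∈ Finset.range (n + 1), (a i : ℤ) * coeff (n - i) (F ^ j) := by
      intro j
      rw [pow_succ', coeff_mul, Finset.Nat.sum_antidiagonal_eq_sum_range_succ_mk]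
      exact Finset.sum_congr rfl fun i _ => by rw [hcoeff]
    simp only [hterm]
    rw [Finset.sum_comm]
    refine Finset.sum_congr rfl fun i hi => ?_
    rw [Finset.mem_range] at hi
    rw [← Finset.mul_sum]
    rcases Nat.eq_zero_or_pos i with rfl | hipos
    · simp [ha0]
    · congr 1
      rw [hS]
      simp only
      refine (Finset.sum_subset (Finset.Icc_subset_Icc_right (by omega)) ?_).symm
      intro k hk1 hk2
      simp only [Finset.mem_Icc] at hk1 hk2
      exact hvanish k (n - i) (by omega)
  -- the convolution identity
  have hconv : ∀ n, 2 ≤ n →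
      (a n : ℤ) + (a (n - 1) : ℤ)
        = 2 * ∑ i ∈ Finset.range (n + 1), (a i : ℤ) * (a (n - i) : ℤ) := by
    intro n hn
    have h1 := hstep n hn
    rw [hS2 n hn] at h1
    have h2 : ∑ i ∈ Finset.range (n + 1),
        ((a i : ℤ) * S (n - i) - 2 * ((a i : ℤ) * (a (n - i) : ℤ)))
        = -(a (n - 1) : ℤ) := by
      rw [Finset.sum_eq_single_of_mem (n - 1) (Finset.mem_range.mpr (by omega))]
      · have hn1 : n - (n - 1) = 1 := by omega
        rw [hn1, hS1, ha1]
        push_cast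
        ring
      · intro i hi hne
        rw [Finset.mem_range] at hi
        rcases Nat.lt_or_ge i n with hlt | hge
        · have h2le : 2 ≤ n - i := by omega
          rw [hS2 _ h2le]
          ring
        · have : i = n := by omega
          subst this
          rw [Nat.sub_self, hS0, ha0]
          push_cast
          ring
    rw [Finset.sum_sub_distrib] at h2
    simp only [← Finset.mul_sum] at h2
    linarith
  -- the quadratic functional equation
  have heq : F * F + F * F = F + X * F - X := by
    ext n
    simp only [map_add, map_sub]
    rw [coeff_mul, Finset.Nat.sum_antidiagonal_eq_sum_range_succ_mk]
    match n with
    | 0 =>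
      simp [hcoeff, ha0, coeff_X, coeff_zero_eq_constantCoeff, constantCoeff_X]
    | 1 =>
      rw [show (1 : ℕ) = 0 + 1 from rfl, coeff_succ_X_mul]
      simp [Finset.sum_range_succ, hcoeff, ha0, ha1, coeff_X]
    | (m + 2) =>
      rw [coeff_succ_X_mul, coeff_X, if_neg (by omega), hcoeff, hcoeff]
      have hc := hconv (m + 2) (by omega)
      have hsub : m + 2 - 1 = m + 1 := by omega
      rw [hsub] at hc
      simp only [hcoeff]
      linarith
  -- differentiate
  set F' : PowerSeries ℤ := d⁄dX ℤ F with hF'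
  have hd := congrArg (d⁄dX ℤ) heq
  simp only [map_add, map_sub, Derivation.leibniz, derivative_X, smul_eq_mul,
    mul_one, one_mul, ← hF'] at hd
  have hODE : (1 - (C 6) * X + X ^ 2) * F'
      = (X - (C 3)) * F + (1 - X) := by
    have h6 : (C 6 : PowerSeries ℤ) = 6 := by simp
    have h3 : (C 3 : PowerSeries ℤ) = 3 := by simp
    rw [h6, h3]
    linear_combination (4 * F - 1 - X) * hd + (2 - 8 * F') * heq
  -- extract coefficients
  have hlin : ∀ n : ℕ, 2 ≤ n →
      ((n : ℤ) + 1) * a (n + 1) =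
        3 * (2 * (n : ℤ) - 1) * a n - ((n : ℤ) - 2) * a (n - 1) := by
    intro n hn
    obtain ⟨m, rfl⟩ : ∃ m, n = m + 2 := ⟨n - 2, by omega⟩
    have h := congrArg (coeff (m + 2)) hODE
    have e1 : (1 - (C 6) * X + X ^ 2) * F'
        = F' - (C 6) * (X * F') + X * (X * F') := by ring
    have e2 : (X - (C 3)) * F + (1 - X)
        = X * F - (C 3) * F + (1 - X) := by ring
    rw [e1, e2] at h
    simp only [map_add, map_sub, PowerSeries.coeff_C_mul, coeff_succ_X_mul,
      hF', coeff_derivative, hcoeff, coeff_one, coeff_X] at h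
    rw [if_neg (by omega : ¬ (m + 2 = 0)), if_neg (by omega : ¬ (m + 2 = 1))] at h
    have hsub : m + 2 - 1 = m + 1 := by omega
    rw [hsub]
    push_cast at h ⊢
    ring_nf at h ⊢
    linarith
  -- small values
  have ha2 : a 2 = 1 := by
    have e := hconv 2 (by norm_num)
    simp [Finset.sum_range_succ, ha0, ha1] at e
    omega
  have ha3 : a 3 = 3 := by
    have e := hconv 3 (by norm_num)
    simp [Finset.sum_range_succ, ha0, ha1, ha2] at e
    omega
  have ha4 : a 4 = 11 := by
    have e := hconv 4 (by norm_num)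
    simp [Finset.sum_range_succ, ha0, ha1, ha2, ha3] at e
    omega
  have ha5 : a 5 = 45 := by
    have e := hconv 5 (by norm_num)
    simp [Finset.sum_range_succ, ha0, ha1, ha2, ha3, ha4] at e
    omega
  have ha6 : a 6 = 197 := by
    have e := hconv 6 (by norm_num)
    simp [Finset.sum_range_succ, ha0, ha1, ha2, ha3, ha4, ha5] at e
    omega
  have ha7 : a 7 = 903 := by
    have e := hconv 7 (by norm_num)
    simp [Finset.sum_range_succ, ha0, ha1, ha2, ha3, ha4, ha5, ha6] at e
    omega
  exact ⟨hlin, ha1, ha2, ha3, ha4, ha5, ha6, ha7⟩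
end
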